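/- Let Ω ⊂ ℝ^n be a bounded domain, let 1 ≤ p < ∞, let u ∈ L^1(Ω), and let g ∈ L^p(Ω) be nonnegative. Suppose there is a constant K > 0 such that |u(x) − u(y)| ≤ K |x − y| (g(x) + g(y)) for almost every pair (x, y) ∈ Ω × Ω. Then ∫_Ω |u(x) − u_Ω|^p dx ≤ (2K · diam(Ω))^p ∫_Ω g(x)^p dx, where u_Ω denotes the average of u over Ω. -/

import Mathlib

open MeasureTheory Metric Set
open scoped NNReal ENNReal

noncomputable section

abbrev En (n : ℕ) := EuclideanSpace ℝ (Fin n)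

/-- The last coordinate of a point of `ℝ^n`. -/
def xlast {n : ℕ} (x : En n) : ℝ := ∑ i : Fin n, if (i : ℕ) + 1 = n then x i else 0

/-- The Euclidean distance between the projections of two points onto the first `n-1`
coordinates. -/
def sideDist {n : ℕ} (x y : En n) : ℝ :=
  Real.sqrt (∑ i : Fin n, if (i : ℕ) + 1 = n then 0 else (x i - y i) ^ 2)

/-- `v` is a weak (distributional) gradient of `u` on `Ω`, with both locally integrable on `Ω`. -/
def IsWeakGradient {n : ℕ} (Ω : Set (En n)) (u : En n → ℝ) (v : En n → En n) : Prop :=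
  LocallyIntegrableOn u Ω volume ∧ LocallyIntegrableOn v Ω volume ∧
    ∀ φ : En n → ℝ, ContDiff ℝ (⊤ : ℕ∞) φ → HasCompactSupport φ → tsupport φ ⊆ Ω →
      ∀ i : Fin n,
        ∫ x in Ω, u x * (fderiv ℝ φ x (EuclideanSpace.single i 1)) =
          - ∫ x in Ω, (v x i) * φ x

/-- `u` belongs to the Sobolev space `W^{1,p}(Ω)`, with weak gradient `v`. -/
def MemW1 {n : ℕ} (p : ℝ) (Ω : Set (En n)) (u : En n → ℝ) (v : En n → En n) : Prop :=
  IsWeakGradient Ω u v ∧ IntegrableOn (fun x => |u x| ^ p) Ω volume ∧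
    IntegrableOn (fun x => ‖v x‖ ^ p) Ω volume

/-- The `W^{1,p}(Ω)` norm of `u`, computed with the weak gradient `v`. -/
def W1Norm {n : ℕ} (p : ℝ) (Ω : Set (En n)) (u : En n → ℝ) (v : En n → En n) : ℝ :=
  (∫ x in Ω, (|u x| ^ p + ‖v x‖ ^ p)) ^ (1 / p)

/-- The `L^{1,p}(Ω)` seminorm of `u`, computed with the weak gradient `v`. -/
def L1Norm {n : ℕ} (p : ℝ) (Ω : Set (En n)) (v : En n → En n) : ℝ :=
  (∫ x in Ω, ‖v x‖ ^ p) ^ (1 / p)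

/-- `Ω ⊆ ℝ^n` is a `(W^{1,p}, W^{1,q})`-extension domain. -/
def IsW1Ext {n : ℕ} (p q : ℝ) (Ω : Set (En n)) : Prop :=
  ∃ C : ℝ, 1 ≤ C ∧ ∀ u v, MemW1 p Ω u v →
    ∃ U V, MemW1 q (univ : Set (En n)) U V ∧
      (∀ᵐ x ∂(volume.restrict Ω), U x = u x) ∧
      W1Norm q univ U V ≤ C * W1Norm p Ω u v

/-- `Ω ⊆ ℝ^n` is an `(L^{1,p}, L^{1,q})`-extension domain. -/
def IsL1Ext {n : ℕ} (p q : ℝ) (Ω : Set (En n)) : Prop :=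
  ∃ C : ℝ, 1 ≤ C ∧ ∀ u v, IsWeakGradient Ω u v →
    IntegrableOn (fun x => ‖v x‖ ^ p) Ω volume →
    ∃ U V, IsWeakGradient (univ : Set (En n)) U V ∧
      IntegrableOn (fun x => ‖V x‖ ^ q) (univ : Set (En n)) volume ∧
      (∀ᵐ x ∂(volume.restrict Ω), U x = u x) ∧
      L1Norm q univ V ≤ C * L1Norm p Ω v

/-- A domain: a nonempty open connected subset of `ℝ^n`. -/
def IsEuclideanDomain {n : ℕ} (Ω : Set (En n)) : Prop := IsOpen Ω ∧ IsConnected Ω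

/-- `Ω` is a `p`-Poincaré domain. -/
def IsPoincare {n : ℕ} (p : ℝ) (Ω : Set (En n)) : Prop :=
  ∃ C : ℝ, 0 < C ∧ ∀ u v, MemW1 p Ω u v →
    (∫ x in Ω, |u x - ⨍ y in Ω, u y| ^ p) ≤ C * ∫ x in Ω, ‖v x‖ ^ p

lemma aux_add_rpow {p a b : ℝ} (hp : 1 ≤ p) (ha : 0 ≤ a) (hb : 0 ≤ b) :
    (a + b) ^ p ≤ 2 ^ (p - 1) * (a ^ p + b ^ p) := by
  have h := NNReal.rpow_add_le_mul_rpow_add_rpow a.toNNReal b.toNNReal hp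
  have h' := NNReal.coe_le_coe.2 h
  push_cast at h'
  rwa [Real.coe_toNNReal a ha, Real.coe_toNNReal b hb] at h'

/-- Let `Ω ⊆ ℝ^n` be a bounded domain, `1 ≤ p < ∞`, `u ∈ L^1(Ω)` and let
`g ∈ L^p(Ω)` be nonnegative.  If `|u(x) - u(y)| ≤ K |x-y| (g(x) + g(y))` for a.e. pair
`(x,y) ∈ Ω × Ω`, then `∫_Ω |u - u_Ω|^p ≤ (2 K diam Ω)^p ∫_Ω g^p`. -/
theorem poincare_of_pointwise_lipschitz_bound
    (n : ℕ) (Ω : Set (En n)) (hΩ : IsEuclideanDomain Ω) (hbdd : Bornology.IsBounded Ω)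
    (p : ℝ) (hp : 1 ≤ p) (u g : En n → ℝ)
    (hu : IntegrableOn u Ω volume)
    (hg0 : ∀ x, 0 ≤ g x)
    (hgmeas : AEStronglyMeasurable g (volume.restrict Ω))
    (hgp : IntegrableOn (fun x => g x ^ p) Ω volume)
    (K : ℝ) (hK : 0 < K)
    (hptwise : ∀ᵐ z ∂((volume.restrict Ω).prod (volume.restrict Ω)),
      |u z.1 - u z.2| ≤ K * dist z.1 z.2 * (g z.1 + g z.2)) :
    (∫ x in Ω, |u x - ⨍ y in Ω, u y| ^ p) ≤
      (2 * K * Metric.diam Ω) ^ p * ∫ x in Ω, g x ^ p := by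
  classical
  obtain ⟨hopen, hconn⟩ := hΩ
  have hΩne : Ω.Nonempty := hconn.nonempty
  have hmeasΩ : MeasurableSet Ω := hopen.measurableSet
  set μ := (volume : Measure (En n)).restrict Ω with hμdef
  have hfin : IsFiniteMeasure μ :=
    ⟨by rw [hμdef, Measure.restrict_apply_univ]; exact hbdd.measure_lt_top⟩
  have hvolpos : (0 : ℝ≥0∞) < volume Ω := hopen.measure_pos volume hΩne
  have hne : NeZero μ := ⟨by
    intro h
    have : μ univ = 0 := by rw [h]; simp
    rw [hμdef, Measure.restrict_apply_univ] at this
    exact hvolpos.ne' this⟩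
  have hp0 : (0 : ℝ) < p := lt_of_lt_of_le one_pos hp
  set M : ℝ := (volume Ω).toReal with hMdef
  have hM : 0 < M := ENNReal.toReal_pos hvolpos.ne' hbdd.measure_lt_top.ne
  have hμuniv : (μ univ).toReal = M := by rw [hμdef, Measure.restrict_apply_univ]
  set D : ℝ := Metric.diam Ω with hDdef
  have hD0 : 0 ≤ D := Metric.diam_nonneg
  set C : ℝ := K * D with hCdef
  have hC0 : 0 ≤ C := mul_nonneg hK.le hD0
  set c : ℝ := ⨍ y in Ω, u y with hcdef
  set I : ℝ := ∫ x in Ω, g x ^ p with hIdef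
  have hI0 : 0 ≤ I := integral_nonneg fun x => Real.rpow_nonneg (hg0 x) p
  have hu' : Integrable u μ := hu
  have hgp' : Integrable (fun x => g x ^ p) μ := hgp
  -- the pointwise bound, iterated
  have h2 : ∀ᵐ x ∂μ, ∀ᵐ y ∂μ, |u x - u y| ≤ K * dist x y * (g x + g y) :=
    Measure.ae_ae_of_ae_prod hptwise
  have hxΩ : ∀ᵐ x ∂μ, x ∈ Ω := ae_restrict_mem hmeasΩ
  -- key a.e. bound
  have key : ∀ᵐ x ∂μ, |u x - c| ^ p ≤ C ^ p * 2 ^ (p - 1) * (g x ^ p + M⁻¹ * I) := by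
    filter_upwards [h2, hxΩ] with x hx hxmem
    have hbnd : ∀ᵐ y ∂μ, |u x - u y| ≤ C * (g x + g y) := by
      filter_upwards [hx, hxΩ] with y hy hymem
      calc |u x - u y| ≤ K * dist x y * (g x + g y) := hy
        _ ≤ K * D * (g x + g y) := by
            apply mul_le_mul_of_nonneg_right _ (add_nonneg (hg0 x) (hg0 y))
            exact mul_le_mul_of_nonneg_left
              (Metric.dist_le_diam_of_mem hbdd hxmem hymem) hK.le
    have hbp : ∀ᵐ y ∂μ, |u x - u y| ^ p ≤ C ^ p * (2 ^ (p - 1) * (g x ^ p + g y ^ p)) := by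
      filter_upwards [hbnd] with y hy
      calc |u x - u y| ^ p ≤ (C * (g x + g y)) ^ p :=
            Real.rpow_le_rpow (abs_nonneg _) hy hp0.le
        _ = C ^ p * (g x + g y) ^ p :=
            Real.mul_rpow hC0 (add_nonneg (hg0 x) (hg0 y))
        _ ≤ C ^ p * (2 ^ (p - 1) * (g x ^ p + g y ^ p)) := by
            exact mul_le_mul_of_nonneg_left
              (aux_add_rpow hp (hg0 x) (hg0 y)) (Real.rpow_nonneg hC0 p)
    have hbint : Integrable (fun y => C ^ p * (2 ^ (p - 1) * (g x ^ p + g y ^ p))) μ :=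
      (((integrable_const (g x ^ p)).add hgp').const_mul _).const_mul _
    have hfint : Integrable (fun y => |u x - u y|) μ :=
      ((integrable_const (u x)).sub hu').abs
    have hfmeas : AEStronglyMeasurable (fun y => |u x - u y| ^ p) μ :=
      ((Real.continuous_rpow_const hp0.le).comp continuous_abs).comp_aestronglyMeasurable
        (aestronglyMeasurable_const.sub hu'.aestronglyMeasurable)
    have hfpint : Integrable (fun y => |u x - u y| ^ p) μ := by
      refine hbint.mono' hfmeas ?_
      filter_upwards [hbp] with y hy
      rwa [Real.norm_eq_abs, abs_of_nonneg (Real.rpow_nonneg (abs_nonneg _) p)]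
    -- Jensen
    have hJ : (⨍ y, |u x - u y| ∂μ) ^ p ≤ ⨍ y, |u x - u y| ^ p ∂μ := by
      exact (convexOn_rpow hp).map_average_le
        ((Real.continuous_rpow_const hp0.le).continuousOn) isClosed_Ici
        (ae_of_all _ fun y => mem_Ici.2 (abs_nonneg _)) hfint hfpint
    have habs : |u x - c| ≤ ⨍ y, |u x - u y| ∂μ := by
      have hsub : Integrable (fun y => u x - u y) μ := (integrable_const (u x)).sub hu'
      have hux : u x - c = ⨍ y, (u x - u y) ∂μ := by
        rw [hcdef, average_eq, average_eq]
        simp only [measureReal_def]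
        rw [hμuniv, smul_eq_mul, smul_eq_mul,
          integral_sub (integrable_const (u x)) hu', integral_const, measureReal_def, hμuniv, smul_eq_mul]
        have hM' : M ≠ 0 := hM.ne'
        field_simp
        ring
      rw [hux, average_eq, average_eq, smul_eq_mul, smul_eq_mul, abs_mul,
        abs_of_nonneg (inv_nonneg.2 measureReal_nonneg)]
      apply mul_le_mul_of_nonneg_left _ (inv_nonneg.2 ENNReal.toReal_nonneg)
      simpa [Real.norm_eq_abs] using norm_integral_le_integral_norm (μ := μ) (fun y => u x - u y)
    have havg : ⨍ y, |u x - u y| ^ p ∂μ ≤ C ^ p * 2 ^ (p - 1) * (g x ^ p + M⁻¹ * I) := by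
      have h1 : ⨍ y, |u x - u y| ^ p ∂μ
          ≤ ⨍ y, C ^ p * (2 ^ (p - 1) * (g x ^ p + g y ^ p)) ∂μ := by
        rw [average_eq, average_eq, smul_eq_mul, smul_eq_mul]
        exact mul_le_mul_of_nonneg_left (integral_mono_ae hfpint hbint hbp)
          (inv_nonneg.2 ENNReal.toReal_nonneg)
      refine h1.trans_eq ?_
      rw [average_eq, measureReal_def, hμuniv, smul_eq_mul]
      rw [integral_const_mul, integral_const_mul, integral_add (integrable_const _) hgp',
        integral_const, measureReal_def, hμuniv, smul_eq_mul, ← hIdef]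
      field_simp
    calc |u x - c| ^ p ≤ (⨍ y, |u x - u y| ∂μ) ^ p :=
          Real.rpow_le_rpow (abs_nonneg _) habs hp0.le
      _ ≤ ⨍ y, |u x - u y| ^ p ∂μ := hJ
      _ ≤ C ^ p * 2 ^ (p - 1) * (g x ^ p + M⁻¹ * I) := havg
  -- integrate the key bound
  have hBint : Integrable (fun x => C ^ p * 2 ^ (p - 1) * (g x ^ p + M⁻¹ * I)) μ :=
    (hgp'.add (integrable_const _)).const_mul _
  have hmain : (∫ x in Ω, |u x - c| ^ p) ≤
      ∫ x, C ^ p * 2 ^ (p - 1) * (g x ^ p + M⁻¹ * I) ∂μ := by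
    refine integral_mono_of_nonneg ?_ hBint key
    exact ae_of_all _ fun x => Real.rpow_nonneg (abs_nonneg _) p
  have hRHS : (∫ x, C ^ p * 2 ^ (p - 1) * (g x ^ p + M⁻¹ * I) ∂μ)
      = (2 * K * D) ^ p * I := by
    rw [integral_const_mul, integral_add hgp' (integrable_const _), integral_const,
      measureReal_def, hμuniv, smul_eq_mul, ← hIdef]
    have hMI : M * (M⁻¹ * I) = I := by field_simp
    rw [hMI]
    have h2p : (2 : ℝ) ^ (p - 1) * 2 = 2 ^ p := by
      rw [Real.rpow_sub two_pos, Real.rpow_one]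
      field_simp
    have h2KD : (2 * K * D) ^ p = 2 ^ p * C ^ p := by
      rw [hCdef, mul_assoc, Real.mul_rpow (by norm_num) (mul_nonneg hK.le hD0)]
    rw [h2KD, ← h2p]
    ring
  calc (∫ x in Ω, |u x - c| ^ p) ≤ ∫ x, C ^ p * 2 ^ (p - 1) * (g x ^ p + M⁻¹ * I) ∂μ := hmain
    _ = (2 * K * D) ^ p * I := hRHS
    _ = (2 * K * Metric.diam Ω) ^ p * ∫ x in Ω, g x ^ p := by rw [← hDdef, ← hIdef]
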